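/- arXiv:math/0405299 — 4 statements merged into one kernel-verified Lean document; each statement's English description precedes it below -/
import Mathlib

section
/- Let a, b, c, a', b', c' be positive integers with a ≥ 2b and a' ≥ 2b'. Suppose that (a+c−2)(b−1) = (a'+c'−2)(b'−1), that b(a+c) = b'(a'+c'), and that (b+1)(4a+c+3) + 2b(a+c+1) = (b'+1)(4a'+c'+3) + 2b'(a'+c'+1). Then a = a', b = b' and c = c'. -/
/-- The three quantities `(a+c-2)(b-1)`, `b(a+c)` and
`(b+1)(4a+c+3) + 2b(a+c+1)` determine the ordered triple `(a,b,c)` of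
positive integers satisfying `a ≥ 2b`. -/
theorem abc_determined
    (a b c a' b' c' : ℤ)
    (ha : 0 < a) (hb : 0 < b) (hc : 0 < c)
    (ha' : 0 < a') (hb' : 0 < b') (hc' : 0 < c')
    (hab : a ≥ 2 * b) (hab' : a' ≥ 2 * b')
    (h1 : (a + c - 2) * (b - 1) = (a' + c' - 2) * (b' - 1))
    (h2 : b * (a + c) = b' * (a' + c'))
    (h3 : (b + 1) * (4 * a + c + 3) + 2 * b * (a + c + 1)
        = (b' + 1) * (4 * a' + c' + 3) + 2 * b' * (a' + c' + 1)) :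
    a = a' ∧ b = b' ∧ c = c' := by
  have hsum : (a + c) + 2 * b = (a' + c') + 2 * b' := by nlinarith [h1, h2]
  have hsq : ((a + c) - 2 * b) ^ 2 = ((a' + c') - 2 * b') ^ 2 := by
    nlinarith [h2, hsum]
  have hfac : (((a + c) - 2 * b) - ((a' + c') - 2 * b')) *
      (((a + c) - 2 * b) + ((a' + c') - 2 * b')) = 0 := by linear_combination hsq
  have hdiff : (a + c) - 2 * b = (a' + c') - 2 * b' := by
    rcases mul_eq_zero.mp hfac with h | h
    · linarith
    · linarith
  have hbb : b = b' := by linarith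
  have hss : a + c = a' + c' := by linarith
  have haa : a = a' := by nlinarith [h3, hbb, hss]
  exact ⟨haa, hbb, by linarith⟩
end

section
/- (Group-theoretic form of Auroux's Lemma.) Let G be a group, let τ ∈ G, and let F be a finite sequence of elements of G whose product φ lies in the center of G. If there exists a finite sequence F' of elements of G such that F is Hurwitz equivalent to the sequence (τ) ++ F', then the simultaneously conjugated sequence (F)_τ is Hurwitz equivalent to F. -/
/-- An elementary Hurwitz move: replace two consecutive entries `x, y` by
`y, y⁻¹ * x * y`. -/
inductive HurwitzMove {G : Type*} [Group G] : List G → List G → Prop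
  | move (A B : List G) (x y : G) :
      HurwitzMove (A ++ x :: y :: B) (A ++ y :: (y⁻¹ * x * y) :: B)

/-- Hurwitz equivalence: the smallest equivalence relation on finite sequences of
elements of `G` containing all elementary Hurwitz moves. -/
def HurwitzEquiv {G : Type*} [Group G] : List G → List G → Prop :=
  Relation.EqvGen HurwitzMove

/-- Simultaneous conjugation of a sequence by an element `b`. -/
def conjList {G : Type*} [Group G] (F : List G) (b : G) : List G :=
  F.map fun g => b⁻¹ * g * b

section Aux

variable {G : Type*} [Group G]

lemma HurwitzMove.prod_eq {L L' : List G} (h : HurwitzMove L L') : L.prod = L'.prod := by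
  cases h with
  | move A B x y => simp [mul_assoc]

lemma HurwitzEquiv.refl (L : List G) : HurwitzEquiv L L := Relation.EqvGen.refl L

lemma HurwitzEquiv.symm {L L' : List G} (h : HurwitzEquiv L L') : HurwitzEquiv L' L :=
  Relation.EqvGen.symm _ _ h

lemma HurwitzEquiv.trans {L₁ L₂ L₃ : List G} (h : HurwitzEquiv L₁ L₂)
    (h' : HurwitzEquiv L₂ L₃) : HurwitzEquiv L₁ L₃ :=
  Relation.EqvGen.trans _ _ _ h h'

lemma HurwitzEquiv.prod_eq {L L' : List G} (h : HurwitzEquiv L L') : L.prod = L'.prod := by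
  induction h with
  | rel _ _ h => exact h.prod_eq
  | refl => rfl
  | symm _ _ _ ih => exact ih.symm
  | trans _ _ _ _ _ ih1 ih2 => exact ih1.trans ih2

lemma HurwitzMove.cons {L L' : List G} (a : G) (h : HurwitzMove L L') :
    HurwitzMove (a :: L) (a :: L') := by
  cases h with
  | move A B x y => exact HurwitzMove.move (a :: A) B x y

lemma HurwitzEquiv.cons {L L' : List G} (a : G) (h : HurwitzEquiv L L') :
    HurwitzEquiv (a :: L) (a :: L') := by
  induction h with
  | rel _ _ h => exact Relation.EqvGen.rel _ _ (h.cons a)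
  | refl => exact HurwitzEquiv.refl _
  | symm _ _ _ ih => exact ih.symm
  | trans _ _ _ _ _ ih1 ih2 => exact ih1.trans ih2

lemma HurwitzMove.conj {L L' : List G} (b : G) (h : HurwitzMove L L') :
    HurwitzMove (conjList L b) (conjList L' b) := by
  cases h with
  | move A B x y =>
    have := HurwitzMove.move (conjList A b) (conjList B b) (b⁻¹ * x * b) (b⁻¹ * y * b)
    simp only [conjList, List.map_append, List.map_cons] at this ⊢
    convert this using 4
    group

lemma HurwitzEquiv.conj {L L' : List G} (b : G) (h : HurwitzEquiv L L') :
    HurwitzEquiv (conjList L b) (conjList L' b) := by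
  induction h with
  | rel _ _ h => exact Relation.EqvGen.rel _ _ (h.conj b)
  | refl => exact HurwitzEquiv.refl _
  | symm _ _ _ ih => exact ih.symm
  | trans _ _ _ _ _ ih1 ih2 => exact ih1.trans ih2

/-- Slide an element rightwards through a list. -/
lemma slide_right (x : G) (L : List G) :
    HurwitzEquiv (x :: L) (L ++ [L.prod⁻¹ * x * L.prod]) := by
  induction L generalizing x with
  | nil => simpa using HurwitzEquiv.refl [x]
  | cons y L ih =>
    have h1 : HurwitzEquiv (x :: y :: L) (y :: (y⁻¹ * x * y) :: L) :=
      Relation.EqvGen.rel _ _ (by simpa using HurwitzMove.move [] L x y)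
    have h2 := (ih (y⁻¹ * x * y)).cons y
    refine h1.trans (h2.trans ?_)
    have : L.prod⁻¹ * (y⁻¹ * x * y) * L.prod =
        (y :: L).prod⁻¹ * x * (y :: L).prod := by
      simp [mul_assoc]
    rw [this]
    exact HurwitzEquiv.refl _

/-- Slide an element leftwards through a list, conjugating the list. -/
lemma slide_left (x : G) (L : List G) :
    HurwitzEquiv (L ++ [x]) (x :: conjList L x) := by
  induction L with
  | nil => simpa [conjList] using HurwitzEquiv.refl [x]
  | cons y L ih =>
    have h1 : HurwitzEquiv (y :: (L ++ [x])) (y :: x :: conjList L x) := ih.cons y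
    have h2 : HurwitzEquiv (y :: x :: conjList L x) (x :: (x⁻¹ * y * x) :: conjList L x) :=
      Relation.EqvGen.rel _ _ (by simpa using HurwitzMove.move [] (conjList L x) y x)
    simpa [conjList] using h1.trans h2

end Aux

/-- **Auroux's Lemma** (group-theoretic form). If the product of `F` is central and
`F` is Hurwitz equivalent to a factorization beginning with `τ`, then the
simultaneous conjugate `(F)_τ` is Hurwitz equivalent to `F`. -/
theorem auroux_lemma {G : Type*} [Group G] (τ : G) (F : List G)
    (hcent : F.prod ∈ Subgroup.center G)
    (h : ∃ F' : List G, HurwitzEquiv F (τ :: F')) :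
    HurwitzEquiv (conjList F τ) F := by
  obtain ⟨F', hF⟩ := h
  set p := F'.prod with hp
  -- τ commutes with p
  have hprod : F.prod = τ * p := by simpa using hF.prod_eq
  have hc : ∀ g : G, g * (τ * p) = (τ * p) * g := by
    intro g
    have := (Subgroup.mem_center_iff.mp hcent) g
    rw [hprod] at this; exact this
  have hcomm : τ * p = p * τ := by
    have := hc τ
    -- τ * (τ * p) = (τ * p) * τ
    have h' : τ * (τ * p) = τ * (p * τ) := by rw [this, mul_assoc]
    exact mul_left_cancel h'
  have hconj : p⁻¹ * τ * p = τ := by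
    rw [mul_assoc, hcomm, ← mul_assoc, inv_mul_cancel, one_mul]
  -- chain: conjList F τ ~ conjList (τ :: F') τ = τ :: conjList F' τ
  --        ~ (slide_left)⁻¹  F' ++ [τ]  ~ (slide_right)⁻¹ τ :: F' ~ F
  have e1 : HurwitzEquiv (conjList F τ) (τ :: conjList F' τ) := by
    have := hF.conj τ
    simpa [conjList, mul_assoc] using this
  have e2 : HurwitzEquiv (F' ++ [τ]) (τ :: conjList F' τ) := slide_left τ F'
  have e3 : HurwitzEquiv (τ :: F') (F' ++ [τ]) := by
    have := slide_right τ F'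
    rwa [← hp, hconj] at this
  exact e1.trans (e2.symm.trans (e3.symm.trans hF.symm))
end

section
/- (Group-theoretic form of Corollary 3.7.) Let G be a group and let F = (τ₁, …, τ_m) be a finite sequence of elements of G with τ₁τ₂⋯τ_m = 1. Let ψ ∈ G be a product of elements each of which occurs as an entry of the sequence F. Then the simultaneously conjugated sequence (F)_ψ is Hurwitz equivalent to F. -/
namespace HurwitzAux

variable {G : Type*} [Group G]

theorem equiv_refl (L : List G) : HurwitzEquiv L L := Relation.EqvGen.refl L

theorem equiv_symm {L L' : List G} (h : HurwitzEquiv L L') : HurwitzEquiv L' L :=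
  Relation.EqvGen.symm _ _ h

theorem equiv_trans {L L' L'' : List G} (h : HurwitzEquiv L L')
    (h' : HurwitzEquiv L' L'') : HurwitzEquiv L L'' :=
  Relation.EqvGen.trans _ _ _ h h'

theorem move_append (C D : List G) {L L' : List G} (h : HurwitzMove L L') :
    HurwitzMove (C ++ L ++ D) (C ++ L' ++ D) := by
  rcases h with ⟨A, B, x, y⟩
  have h1 : C ++ (A ++ x :: y :: B) ++ D = (C ++ A) ++ x :: y :: (B ++ D) := by
    simp
  have h2 : C ++ (A ++ y :: (y⁻¹ * x * y) :: B) ++ D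
      = (C ++ A) ++ y :: (y⁻¹ * x * y) :: (B ++ D) := by simp
  rw [h1, h2]
  exact HurwitzMove.move _ _ _ _

theorem equiv_append (C D : List G) {L L' : List G} (h : HurwitzEquiv L L') :
    HurwitzEquiv (C ++ L ++ D) (C ++ L' ++ D) := by
  induction h with
  | rel _ _ h => exact Relation.EqvGen.rel _ _ (move_append C D h)
  | refl _ => exact equiv_refl _
  | symm _ _ _ ih => exact equiv_symm ih
  | trans _ _ _ _ _ ih1 ih2 => exact equiv_trans ih1 ih2

theorem conjList_append (A B : List G) (b : G) :
    conjList (A ++ B) b = conjList A b ++ conjList B b := by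
  simp [conjList]

theorem conjList_cons (a : G) (A : List G) (b : G) :
    conjList (a :: A) b = (b⁻¹ * a * b) :: conjList A b := rfl

theorem conjList_one (A : List G) : conjList A 1 = A := by
  simp [conjList]

theorem conjList_mul (A : List G) (a b : G) :
    conjList A (a * b) = conjList (conjList A a) b := by
  simp [conjList, Function.comp, mul_assoc]

theorem conjList_prod (A : List G) (b : G) :
    (conjList A b).prod = b⁻¹ * A.prod * b := by
  induction A with
  | nil => simp [conjList]
  | cons a A ih => simp [conjList_cons, ih, mul_assoc]

theorem move_conj {L L' : List G} (h : HurwitzMove L L') (b : G) :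
    HurwitzMove (conjList L b) (conjList L' b) := by
  rcases h with ⟨A, B, x, y⟩
  have h1 : conjList (A ++ x :: y :: B) b
      = conjList A b ++ (b⁻¹ * x * b) :: (b⁻¹ * y * b) :: conjList B b := by
    simp [conjList_append, conjList_cons]
  have h2 : conjList (A ++ y :: (y⁻¹ * x * y) :: B) b
      = conjList A b ++ (b⁻¹ * y * b) ::
        ((b⁻¹ * y * b)⁻¹ * (b⁻¹ * x * b) * (b⁻¹ * y * b)) :: conjList B b := by
    simp [conjList_append, conjList_cons]
    group
  rw [h1, h2]
  exact HurwitzMove.move _ _ _ _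

theorem equiv_conj {L L' : List G} (h : HurwitzEquiv L L') (b : G) :
    HurwitzEquiv (conjList L b) (conjList L' b) := by
  induction h with
  | rel _ _ h => exact Relation.EqvGen.rel _ _ (move_conj h b)
  | refl _ => exact equiv_refl _
  | symm _ _ _ ih => exact equiv_symm ih
  | trans _ _ _ _ _ ih1 ih2 => exact equiv_trans ih1 ih2

/-- Moving an entry `τ` from the end to the front. -/
theorem move_to_front (A : List G) (τ : G) :
    HurwitzEquiv (A ++ [τ]) (τ :: conjList A τ) := by
  induction A with
  | nil => simp [conjList]; exact equiv_refl _
  | cons a A ih =>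
    have h1 : HurwitzEquiv (a :: (A ++ [τ])) (a :: (τ :: conjList A τ)) := by
      have := equiv_append [a] [] ih
      simpa using this
    have h2 : HurwitzMove (a :: τ :: conjList A τ)
        (τ :: (τ⁻¹ * a * τ) :: conjList A τ) := by
      have := HurwitzMove.move ([] : List G) (conjList A τ) a τ
      simpa using this
    refine equiv_trans (by simpa using h1) ?_
    rw [conjList_cons]
    exact Relation.EqvGen.rel _ _ h2

/-- Moving an entry from the front to the back, conjugating it by the product. -/
theorem move_to_back (L : List G) (τ : G) :
    HurwitzEquiv (τ :: L) (L ++ [L.prod⁻¹ * τ * L.prod]) := by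
  induction L generalizing τ with
  | nil => simp; exact equiv_refl _
  | cons c L ih =>
    have h1 : HurwitzMove (τ :: c :: L) (c :: (c⁻¹ * τ * c) :: L) := by
      have := HurwitzMove.move ([] : List G) L τ c
      simpa using this
    have h2 : HurwitzEquiv (c :: ((c⁻¹ * τ * c) :: L))
        (c :: (L ++ [L.prod⁻¹ * (c⁻¹ * τ * c) * L.prod])) := by
      have := equiv_append [c] ([] : List G) (ih (c⁻¹ * τ * c))
      simpa using this
    refine equiv_trans (Relation.EqvGen.rel _ _ h1) ?_
    refine equiv_trans h2 ?_
    have : (c :: L).prod⁻¹ * τ * (c :: L).prod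
        = L.prod⁻¹ * (c⁻¹ * τ * c) * L.prod := by
      rw [List.prod_cons]; group
    rw [this]
    simp only [List.cons_append]
    exact equiv_refl _

/-- If `τ` occurs in `F` and `F.prod = 1`, then `(F)_τ ~ F`. -/
theorem conj_entry (F : List G) (hF : F.prod = 1) {τ : G} (hτ : τ ∈ F) :
    HurwitzEquiv (conjList F τ) F := by
  obtain ⟨A, B, rfl⟩ := List.append_of_mem hτ
  -- Step 1: F ~ τ :: (conjList A τ ++ B)
  have step1 : HurwitzEquiv (A ++ τ :: B) (τ :: (conjList A τ ++ B)) := by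
    have := equiv_append ([] : List G) B (move_to_front A τ)
    simpa using this
  -- the tail has product τ⁻¹
  have hprod : (conjList A τ ++ B).prod = τ⁻¹ := by
    have h1 : A.prod * (τ * B.prod) = 1 := by
      have := hF; rw [List.prod_append, List.prod_cons] at this
      simpa [mul_assoc] using this
    have hB : τ * B.prod = A.prod⁻¹ := eq_inv_of_mul_eq_one_right h1
    rw [List.prod_append, conjList_prod]
    have : B.prod = τ⁻¹ * A.prod⁻¹ := by rw [← hB]; group
    rw [this]; group
  -- Step 2: τ :: (conjList A τ ++ B) ~ conjList A τ ++ B ++ [τ]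
  have step2 : HurwitzEquiv (τ :: (conjList A τ ++ B))
      ((conjList A τ ++ B) ++ [τ]) := by
    have := move_to_back (conjList A τ ++ B) τ
    rw [hprod] at this
    simpa using this
  -- Step 3: conjList A τ ++ B ++ [τ] ~ conjList A τ ++ τ :: conjList B τ = conjList F τ
  have step3 : HurwitzEquiv (conjList A τ ++ (B ++ [τ]))
      (conjList A τ ++ (τ :: conjList B τ)) := by
    have := equiv_append (conjList A τ) ([] : List G) (move_to_front B τ)
    simpa using this
  have hconj : conjList (A ++ τ :: B) τ = conjList A τ ++ (τ :: conjList B τ) := by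
    rw [conjList_append, conjList_cons]
    congr 2
    group
  rw [hconj]
  refine equiv_symm (equiv_trans step1 (equiv_trans step2 ?_))
  simpa using step3

end HurwitzAux

/-- **Corollary 3.7** (group-theoretic form). If `F` is a factorization of the
identity and `ψ` is a product of elements each occurring as an entry of `F`,
then `(F)_ψ` is Hurwitz equivalent to `F`. -/
theorem hurwitzEquiv_conj_by_product_of_entries {G : Type*} [Group G]
    (F T : List G) (hF : F.prod = 1) (hT : ∀ τ ∈ T, τ ∈ F) :
    HurwitzEquiv (conjList F T.prod) F := by
  induction T using List.reverseRecOn with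
  | nil => rw [List.prod_nil, HurwitzAux.conjList_one]; exact HurwitzAux.equiv_refl F
  | append_singleton T τ ih =>
    have hτ : τ ∈ F := hT τ (by simp)
    have hT' : ∀ σ ∈ T, σ ∈ F := fun σ hσ => hT σ (by simp [hσ])
    have ihF := ih hT'
    rw [List.prod_append, List.prod_singleton, HurwitzAux.conjList_mul]
    exact HurwitzAux.equiv_trans (HurwitzAux.equiv_conj ihF τ)
      (HurwitzAux.conj_entry F hF hτ)
end

section
/- Let G be a group, let n ≥ 2, and let a₁, …, a_{n−1}, c₁, …, c_{n−1} ∈ G satisfy: a_i a_{i+1} a_i = a_{i+1} a_i a_{i+1} for 1 ≤ i ≤ n−2, a_i a_j = a_j a_i for |i−j| ≥ 2, the same relations for the c_i, and a_i c_j = c_j a_i for all i, j. For 2 ≤ j ≤ n define μ_j := (a₁a₂⋯a_{j−2})·a_{j−1}·(a₁a₂⋯a_{j−2})⁻¹ and ν_j := (c₁c₂⋯c_{j−2})·c_{j−1}·(c₁c₂⋯c_{j−2})⁻¹ (so μ₂ = a₁, ν₂ = c₁). Then the sequence (μ_n, μ_n, ν_n, ν_n, μ_{n−1}, μ_{n−1},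 ν_{n−1}, ν_{n−1}, …, μ₂, μ₂, ν₂, ν₂) is Hurwitz equivalent to the sequence (a₁, a₂, …, a_{n−2}, a_{n−1}, a_{n−1}, a_{n−2}, …, a₂, a₁, c₁, c₂, …, c_{n−2}, c_{n−1}, c_{n−1}, c_{n−2}, …, c₂, c₁). -/
/-- The ascending product `x_j * x_{j+1} * ⋯ * x_k` (equal to `1` when `k < j`). -/
def ascProd {G : Type*} [Group G] (x : ℕ → G) (j k : ℕ) : G :=
  ((List.range (k + 1 - j)).map fun i => x (j + i)).prod

namespace HW
variable {G : Type*} [Group G]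

theorem he_refl (L : List G) : HurwitzEquiv L L := Relation.EqvGen.refl L

theorem he_trans {L M N : List G} (h1 : HurwitzEquiv L M) (h2 : HurwitzEquiv M N) :
    HurwitzEquiv L N := Relation.EqvGen.trans _ _ _ h1 h2

theorem he_of_move {L M : List G} (h : HurwitzMove L M) : HurwitzEquiv L M :=
  Relation.EqvGen.rel _ _ h

theorem move_congr (X Y : List G) {L M : List G} (h : HurwitzMove L M) :
    HurwitzMove (X ++ L ++ Y) (X ++ M ++ Y) := by
  cases h with
  | move A B x y =>
    have := HurwitzMove.move (X ++ A) (B ++ Y) x y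
    simpa [List.append_assoc] using this

theorem he_congr (X Y : List G) {L M : List G} (h : HurwitzEquiv L M) :
    HurwitzEquiv (X ++ L ++ Y) (X ++ M ++ Y) := by
  induction h with
  | rel _ _ h => exact he_of_move (move_congr X Y h)
  | refl _ => exact he_refl _
  | symm _ _ _ ih => exact Relation.EqvGen.symm _ _ ih
  | trans _ _ _ _ _ ih1 ih2 => exact he_trans ih1 ih2

theorem slide (x : G) (B : List G) :
    HurwitzEquiv (x :: B) (B ++ [B.prod⁻¹ * x * B.prod]) := by
  induction B generalizing x with
  | nil => simpa using he_refl [x]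
  | cons y B ih =>
    have h1 : HurwitzEquiv (x :: y :: B) (y :: (y⁻¹ * x * y) :: B) :=
      he_of_move (by simpa using HurwitzMove.move [] B x y)
    have h2 := he_congr [y] [] (ih (y⁻¹ * x * y))
    refine he_trans h1 (he_trans (by simpa using h2) ?_)
    have he : B.prod⁻¹ * (y⁻¹ * x * y) * B.prod
        = (y :: B).prod⁻¹ * x * (y :: B).prod := by
      simp [mul_assoc]
    rw [he]
    exact he_refl _

theorem slide_comm (x : G) (B : List G) (h : ∀ y ∈ B, Commute x y) :
    HurwitzEquiv (x :: B) (B ++ [x]) := by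
  have hp : Commute x B.prod := Commute.list_prod_right _ _ h
  have := slide x B
  rwa [show B.prod⁻¹ * x * B.prod = x by
    rw [mul_assoc, hp.eq, inv_mul_cancel_left]] at this

end HW

/-- The Hurwitz equivalence of factorizations asserted in the appendix of the paper:
`(μ_n, μ_n, ν_n, ν_n, …, μ₂, μ₂, ν₂, ν₂)` is Hurwitz equivalent to
`(a₁, …, a_{n-2}, a_{n-1}, a_{n-1}, a_{n-2}, …, a₁, c₁, …, c_{n-2}, c_{n-1}, c_{n-1}, c_{n-2}, …, c₁)`,
where `μ_j = (a₁⋯a_{j-2}) a_{j-1} (a₁⋯a_{j-2})⁻¹` and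
`ν_j = (c₁⋯c_{j-2}) c_{j-1} (c₁⋯c_{j-2})⁻¹`, the `a_i` and the `c_i` each
satisfying the braid relations, and every `a_i` commuting with every `c_j`. -/
theorem monodromy_factorization_hurwitz_equiv {G : Type*} [Group G]
    (n : ℕ) (hn : 2 ≤ n) (a c : ℕ → G)
    (hbraid_a : ∀ i, 1 ≤ i → i ≤ n - 2 →
      a i * a (i + 1) * a i = a (i + 1) * a i * a (i + 1))
    (hcomm_a : ∀ i j, 1 ≤ i → j ≤ n - 1 → i + 2 ≤ j → a i * a j = a j * a i)
    (hbraid_c : ∀ i, 1 ≤ i → i ≤ n - 2 →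
      c i * c (i + 1) * c i = c (i + 1) * c i * c (i + 1))
    (hcomm_c : ∀ i j, 1 ≤ i → j ≤ n - 1 → i + 2 ≤ j → c i * c j = c j * c i)
    (hac : ∀ i j, 1 ≤ i → i ≤ n - 1 → 1 ≤ j → j ≤ n - 1 → a i * c j = c j * a i)
    (μ ν : ℕ → G)
    (hμ : ∀ j, 2 ≤ j → j ≤ n →
      μ j = ascProd a 1 (j - 2) * a (j - 1) * (ascProd a 1 (j - 2))⁻¹)
    (hν : ∀ j, 2 ≤ j → j ≤ n →
      ν j = ascProd c 1 (j - 2) * c (j - 1) * (ascProd c 1 (j - 2))⁻¹) :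
    HurwitzEquiv
      ((List.range (n - 1)).reverse.flatMap fun i =>
        [μ (i + 2), μ (i + 2), ν (i + 2), ν (i + 2)])
      (((List.range (n - 1)).map fun i => a (i + 1)) ++
        ((List.range (n - 1)).map fun i => a (i + 1)).reverse ++
        ((List.range (n - 1)).map fun i => c (i + 1)) ++
        ((List.range (n - 1)).map fun i => c (i + 1)).reverse) := by
  have key : ∀ m, 1 ≤ m → m ≤ n - 1 →
      HurwitzEquiv
        ((List.range m).reverse.flatMap fun i =>
          [μ (i + 2), μ (i + 2), ν (i + 2), ν (i + 2)])
        (((List.range m).map fun i => a (i + 1)) ++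
          (((List.range m).map fun i => a (i + 1)).reverse ++
          (((List.range m).map fun i => c (i + 1)) ++
          ((List.range m).map fun i => c (i + 1)).reverse))) := by
    intro m
    induction m with
    | zero => intro h _; omega
    | succ m ih =>
      intro _ hm1
      by_cases hm0 : m = 0
      · subst hm0
        have hμ2 : μ 2 = a 1 := by simpa [ascProd] using hμ 2 (by omega) hn
        have hν2 : ν 2 = c 1 := by simpa [ascProd] using hν 2 (by omega) hn
        have el : ((List.range 1).reverse.flatMap fun i =>
            [μ (i + 2), μ (i + 2), ν (i + 2), ν (i + 2)]) = [a 1, a 1, c 1, c 1] := by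
          simp [List.range_succ, hμ2, hν2]
        rw [el]
        simpa using HW.he_refl [a 1, a 1, c 1, c 1]
      · have hm : 1 ≤ m := by omega
        have ihm := ih hm (by omega)
        have hj2 : 2 ≤ m + 2 := by omega
        have hjn : m + 2 ≤ n := by omega
        set Am := (List.range m).map (fun i => a (i + 1)) with hAm
        set Cm := (List.range m).map (fun i => c (i + 1)) with hCm
        have hμm : μ (m + 2) = Am.prod * a (m + 1) * Am.prod⁻¹ := by
          simpa [ascProd, hAm, add_comm] using hμ (m + 2) hj2 hjn
        have hνm : ν (m + 2) = Cm.prod * c (m + 1) * Cm.prod⁻¹ := by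
          simpa [ascProd, hCm, add_comm] using hν (m + 2) hj2 hjn
        have hconjA : Am.prod⁻¹ * μ (m + 2) * Am.prod = a (m + 1) := by
          rw [hμm]; group
        have hconjC : Cm.prod⁻¹ * ν (m + 2) * Cm.prod = c (m + 1) := by
          rw [hνm]; group
        have hcommA : ∀ k, 1 ≤ k → k ≤ n - 1 → Commute (a k) (ν (m + 2)) := by
          intro k hk1 hk2
          have hPc : Commute (a k) Cm.prod := by
            apply Commute.list_prod_right
            intro y hy
            rw [hCm] at hy
            obtain ⟨i, hi, rfl⟩ := List.mem_map.mp hy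
            have hi' : i < m := List.mem_range.mp hi
            exact hac k (i + 1) hk1 hk2 (by omega) (by omega)
          have hc : Commute (a k) (c (m + 1)) := hac k (m + 1) hk1 hk2 (by omega) (by omega)
          rw [hνm]
          exact (hPc.mul_right hc).mul_right hPc.inv_right
        have hcommD : ∀ y ∈ Am ++ Am.reverse, Commute (ν (m + 2)) y := by
          intro y hy
          have hy' : y ∈ Am := by
            rcases List.mem_append.mp hy with h | h
            · exact h
            · exact List.mem_reverse.mp h
          rw [hAm] at hy'
          obtain ⟨i, hi, rfl⟩ := List.mem_map.mp hy'
          have hi' : i < m := List.mem_range.mp hi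
          exact (hcommA (i + 1) (by omega) (by omega)).symm
        set μ' := μ (m + 2)
        set ν' := ν (m + 2)
        set x := a (m + 1)
        set z := c (m + 1)
        set Fm := (List.range m).reverse.flatMap
          (fun i => [μ (i + 2), μ (i + 2), ν (i + 2), ν (i + 2)]) with hFm
        -- chain
        have slA : HurwitzEquiv (μ' :: Am) (Am ++ [x]) := by
          have := HW.slide μ' Am
          rwa [hconjA] at this
        have slC : HurwitzEquiv (ν' :: Cm) (Cm ++ [z]) := by
          have := HW.slide ν' Cm
          rwa [hconjC] at this
        have slD : HurwitzEquiv (ν' :: (Am ++ Am.reverse)) ((Am ++ Am.reverse) ++ [ν']) :=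
          HW.slide_comm _ _ hcommD
        have c0 : HurwitzEquiv (μ' :: μ' :: ν' :: ν' :: Fm)
            (μ' :: μ' :: ν' :: ν' :: (Am ++ (Am.reverse ++ (Cm ++ Cm.reverse)))) := by
          simpa using HW.he_congr [μ', μ', ν', ν'] [] ihm
        have c1 : HurwitzEquiv
            (μ' :: μ' :: ν' :: ν' :: (Am ++ (Am.reverse ++ (Cm ++ Cm.reverse))))
            (μ' :: μ' :: ν' :: (Am ++ (Am.reverse ++ ν' :: (Cm ++ Cm.reverse)))) := by
          simpa [List.append_assoc] using
            HW.he_congr [μ', μ', ν'] (Cm ++ Cm.reverse) slD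
        have c2 : HurwitzEquiv
            (μ' :: μ' :: ν' :: (Am ++ (Am.reverse ++ ν' :: (Cm ++ Cm.reverse))))
            (μ' :: μ' :: (Am ++ (Am.reverse ++ ν' :: ν' :: (Cm ++ Cm.reverse)))) := by
          simpa [List.append_assoc] using
            HW.he_congr [μ', μ'] (ν' :: (Cm ++ Cm.reverse)) slD
        have c3 : HurwitzEquiv
            (μ' :: μ' :: (Am ++ (Am.reverse ++ ν' :: ν' :: (Cm ++ Cm.reverse))))
            (μ' :: (Am ++ x :: (Am.reverse ++ ν' :: ν' :: (Cm ++ Cm.reverse)))) := by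
          simpa [List.append_assoc] using
            HW.he_congr [μ'] (Am.reverse ++ ν' :: ν' :: (Cm ++ Cm.reverse)) slA
        have c4 : HurwitzEquiv
            (μ' :: (Am ++ x :: (Am.reverse ++ ν' :: ν' :: (Cm ++ Cm.reverse))))
            (Am ++ x :: x :: (Am.reverse ++ ν' :: ν' :: (Cm ++ Cm.reverse))) := by
          simpa [List.append_assoc] using
            HW.he_congr [] (x :: (Am.reverse ++ ν' :: ν' :: (Cm ++ Cm.reverse))) slA
        have c5 : HurwitzEquiv
            (Am ++ x :: x :: (Am.reverse ++ ν' :: ν' :: (Cm ++ Cm.reverse)))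
            (Am ++ x :: x :: (Am.reverse ++ ν' :: (Cm ++ z :: Cm.reverse))) := by
          simpa [List.append_assoc] using
            HW.he_congr (Am ++ x :: x :: (Am.reverse ++ [ν'])) Cm.reverse slC
        have c6 : HurwitzEquiv
            (Am ++ x :: x :: (Am.reverse ++ ν' :: (Cm ++ z :: Cm.reverse)))
            (Am ++ x :: x :: (Am.reverse ++ (Cm ++ z :: z :: Cm.reverse))) := by
          simpa [List.append_assoc] using
            HW.he_congr (Am ++ x :: x :: Am.reverse) (z :: Cm.reverse) slC
        have chain := HW.he_trans c0 (HW.he_trans c1 (HW.he_trans c2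
          (HW.he_trans c3 (HW.he_trans c4 (HW.he_trans c5 c6)))))
        simpa [List.range_succ, List.append_assoc, hFm, hAm, hCm] using chain
  have := key (n - 1) (by omega) le_rfl
  simpa [List.append_assoc] using this
end
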